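/- Let γ be a simple closed C¹ curve in ℝ² with Continuous (deriv γ.curve), and define its enclosed area A = (1/2)·∫₀^L (x(t)·y'(t) - y(t)·x'(t)) dt where x, y are the coordinates of γ.curve. Let f, g be the reparametrized coordinates on [0, 2π]. Then A ≤ (1/2)·∫₀^{2π} (f(θ)² + (deriv g θ)²) dθ. -/

import Mathlib

/-- A simple closed C¹ curve in ℝⁿ, parametrized over [0, L] where L is the arc length. -/
structure SimpleClosedC1Curve (n : ℕ) where
  curve : ℝ → EuclideanSpace ℝ (Fin n)
  length : ℝ
  length_pos : 0 < length
  continuous : Continuous curve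
  has_deriv : ∀ t : ℝ, ∃ f : EuclideanSpace ℝ (Fin n), HasDerivAt curve f t
  closed : curve 0 = curve length
  periodic : ∀ t : ℝ, curve (t + length) = curve t
  simple : ∀ t s : ℝ, t ∈ Set.Ioo 0 length → s ∈ Set.Ioo 0 length →
    curve t = curve s → t = s

/-- x-coordinate of γ at s. -/
noncomputable def xCoord (γ : SimpleClosedC1Curve 2) (s : ℝ) : ℝ := γ.curve s 0

/-- y-coordinate of γ at s. -/
noncomputable def yCoord (γ : SimpleClosedC1Curve 2) (s : ℝ) : ℝ := γ.curve s 1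

/-- Reparametrized x: f(θ) = x(Lθ/(2π)). -/
noncomputable def fParm (γ : SimpleClosedC1Curve 2) (θ : ℝ) : ℝ :=
  xCoord γ (γ.length * θ / (2 * Real.pi))

/-- Reparametrized y: g(θ) = y(Lθ/(2π)). -/
noncomputable def gParm (γ : SimpleClosedC1Curve 2) (θ : ℝ) : ℝ :=
  yCoord γ (γ.length * θ / (2 * Real.pi))

/-- Unit-speed (arc-length parametrization). -/
def IsArcLengthParametrized {n : ℕ} (γ : SimpleClosedC1Curve n) : Prop :=
  ∀ t : ℝ, ‖deriv γ.curve t‖ = 1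

/-- Enclosed (signed) area via the shoelace formula. -/
noncomputable def area (γ : SimpleClosedC1Curve 2) (a b : ℝ) : ℝ :=
  (1/2) * ∫ t in a..b,
    (γ.curve t 0 * deriv γ.curve t 1 - γ.curve t 1 * deriv γ.curve t 0)

open intervalIntegral Real
open MeasureTheory (volume)
open scoped Interval

/-! Integration by parts turns the shoelace integral of a closed curve into `2 ∫ x y'`, and the
linear substitution `t = Lθ/(2π)` turns `∫₀^L x y' dt` into `∫₀^{2π} f g' dθ`; the bound then
follows by integrating `2 f g' ≤ f² + g'²`. -/

theorem integral_mul_le_half_integral_sq_add_sq {u v : ℝ → ℝ} {a b : ℝ} (hab : a ≤ b)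
    (hu : ContinuousOn u [[a, b]]) (hv : ContinuousOn v [[a, b]]) :
    ∫ x in a..b, u x * v x ≤ (1/2) * ∫ x in a..b, (u x ^ 2 + v x ^ 2) := by
  rw [← integral_const_mul]
  refine integral_mono_on hab (hu.mul hv).intervalIntegrable
    (continuousOn_const.mul ((hu.pow 2).add (hv.pow 2))).intervalIntegrable fun x _ => ?_
  linarith [two_mul_le_add_sq (u x) (v x)]

theorem integral_mul_deriv_sub_mul_deriv_of_mul_eq {u v u' v' : ℝ → ℝ} {a b : ℝ}
    (hu : ∀ x ∈ [[a, b]], HasDerivAt u (u' x) x) (hv : ∀ x ∈ [[a, b]], HasDerivAt v (v' x) x)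
    (hu' : IntervalIntegrable u' volume a b) (hv' : IntervalIntegrable v' volume a b)
    (hclosed : u b * v b = u a * v a) :
    ∫ x in a..b, (u x * v' x - v x * u' x) = 2 * ∫ x in a..b, u x * v' x := by
  have hcu : ContinuousOn u [[a, b]] := fun x hx => (hu x hx).continuousAt.continuousWithinAt
  have hcv : ContinuousOn v [[a, b]] := fun x hx => (hv x hx).continuousAt.continuousWithinAt
  have hparts := integral_mul_deriv_eq_deriv_mul hu hv hu' hv'
  have hcomm : ∫ x in a..b, v x * u' x = ∫ x in a..b, u' x * v x := by
    simp only [mul_comm]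
  rw [integral_sub (hv'.continuousOn_mul hcu) (hu'.continuousOn_mul hcv), hcomm]
  linarith

theorem HasDerivAt.euclideanSpace_apply {ι : Type*} [Fintype ι] {φ : ℝ → EuclideanSpace ℝ ι}
    {φ' : EuclideanSpace ℝ ι} {t : ℝ} (h : HasDerivAt φ φ' t) (i : ι) :
    HasDerivAt (fun s => φ s i) (φ' i) t := by
  exact (EuclideanSpace.proj i).hasFDerivAt.comp_hasDerivAt t h

namespace SimpleClosedC1Curve

theorem hasDerivAt_apply {n : ℕ} (γ : SimpleClosedC1Curve n) (t : ℝ) (i : Fin n) :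
    HasDerivAt (fun s => γ.curve s i) (deriv γ.curve t i) t := by
  obtain ⟨v, hv⟩ := γ.has_deriv t
  exact hv.differentiableAt.hasDerivAt.euclideanSpace_apply i

theorem area_eq_integral_mul_deriv (γ : SimpleClosedC1Curve 2)
    (hdc : Continuous (deriv γ.curve)) :
    area γ 0 γ.length = ∫ t in (0:ℝ)..γ.length, γ.curve t 0 * deriv γ.curve t 1 := by
  have hd : ∀ i : Fin 2, IntervalIntegrable (fun t => deriv γ.curve t i) volume 0 γ.length :=
    fun i => ((EuclideanSpace.proj i).continuous.comp hdc).intervalIntegrable _ _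
  rw [area, integral_mul_deriv_sub_mul_deriv_of_mul_eq (fun t _ => γ.hasDerivAt_apply t 0)
    (fun t _ => γ.hasDerivAt_apply t 1) (hd 0) (hd 1) (by rw [γ.closed])]
  ring

theorem gParm_eq (γ : SimpleClosedC1Curve 2) :
    gParm γ = fun θ => γ.curve (γ.length / (2 * π) * θ) 1 := by
  ext θ
  rw [gParm, yCoord, mul_div_right_comm]

theorem deriv_gParm (γ : SimpleClosedC1Curve 2) (θ : ℝ) :
    deriv (gParm γ) θ = γ.length / (2 * π) * deriv γ.curve (γ.length / (2 * π) * θ) 1 := by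
  rw [γ.gParm_eq, deriv_comp_mul_left (γ.length / (2 * π)) (fun t => γ.curve t 1),
    (γ.hasDerivAt_apply _ 1).deriv, smul_eq_mul]

theorem integral_fParm_mul_deriv_gParm (γ : SimpleClosedC1Curve 2) :
    ∫ θ in (0:ℝ)..(2 * π), fParm γ θ * deriv (gParm γ) θ =
      ∫ t in (0:ℝ)..γ.length, γ.curve t 0 * deriv γ.curve t 1 := by
  set c := γ.length / (2 * π)
  have hc : c * (2 * π) = γ.length := div_mul_cancel₀ _ (by positivity)
  have hsubst := smul_integral_comp_mul_left (a := 0) (b := 2 * π)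
    (fun t => γ.curve t 0 * deriv γ.curve t 1) c
  rw [mul_zero, hc, smul_eq_mul, ← integral_const_mul] at hsubst
  rw [← hsubst]
  refine integral_congr fun θ _ => ?_
  rw [fParm, xCoord, deriv_gParm, mul_div_right_comm]
  ring

theorem continuous_fParm (γ : SimpleClosedC1Curve 2) : Continuous (fParm γ) := by
  unfold fParm xCoord
  exact (EuclideanSpace.proj 0).continuous.comp (γ.continuous.comp (by fun_prop))

theorem continuous_deriv_gParm (γ : SimpleClosedC1Curve 2) (hdc : Continuous (deriv γ.curve)) :
    Continuous (deriv (gParm γ)) := by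
  simp only [funext γ.deriv_gParm]
  fun_prop

end SimpleClosedC1Curve

theorem area_inequality (γ : SimpleClosedC1Curve 2)
    (hdc : Continuous (deriv γ.curve)) :
    area γ 0 γ.length ≤
      (1/2) * ∫ θ in (0:ℝ)..(2*Real.pi), ((fParm γ θ)^2 + (deriv (gParm γ) θ)^2) := by
  rw [γ.area_eq_integral_mul_deriv hdc, ← γ.integral_fParm_mul_deriv_gParm]
  exact integral_mul_le_half_integral_sq_add_sq (by positivity) γ.continuous_fParm.continuousOn
    (γ.continuous_deriv_gParm hdc).continuousOn
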